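/- Assume G satisfies the U-Hypothesis with respect to ℕ, set U := {n ∈ ℕ : n⁻¹ ∈ ℕ}, and assume in addition that D is finite-dimensional as a vector space over its center F. Then the image of N in G/U is contained in the center of G/U; equivalently, for all g ∈ G and n ∈ N, the commutator g⁻¹n⁻¹gn lies in U. -/

import Mathlib

open scoped Pointwise

/-- The subset of `D` consisting of (the values of) the units belonging to `N`. -/
def unitsSet {D : Type*} [DivisionRing D] (N : Subgroup Dˣ) : Set D :=
  Units.val '' (N : Set Dˣ)

/-- For `a : D`, the set `N(a) = {n ∈ N : a + n ∈ N}`. -/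
def nSet {D : Type*} [DivisionRing D] (N : Subgroup Dˣ) (a : D) : Set D :=
  {x : D | x ∈ unitsSet N ∧ a + x ∈ unitsSet N}

/-- The commuting graph of a group: vertices are the nonidentity elements,
two distinct nonidentity elements are adjacent iff they commute. (The identity is
an isolated vertex.) -/
def commGraph (Q : Type*) [Group Q] : SimpleGraph Q where
  Adj a b := a ≠ b ∧ a ≠ 1 ∧ b ≠ 1 ∧ a * b = b * a
  symm := by
    refine ⟨fun a b h => ?_⟩
    exact ⟨Ne.symm h.1, h.2.2.1, h.2.1, h.2.2.2.symm⟩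
  loopless := by exact ⟨fun a h => h.1 rfl⟩

/-- `distGT Γ u v k` : there is no path (walk) of length at most `k` from `u` to `v`,
i.e. `d(u,v) > k`. -/
def distGT {Q : Type*} (Γ : SimpleGraph Q) (u v : Q) (k : ℕ) : Prop :=
  ∀ p : Γ.Walk u v, k < p.length

/-- `G` satisfies the *U-Hypothesis* with respect to `S`: `S` is a conjugation-invariant
subset of `G` with `∅ ≠ S ⊊ N` such that (U1) `1, −1 ∈ S`; (U2) `S·S = S`;
(U3) for all `n̄ ∈ N∖S`, `n̄ + 1 ∈ S` and `n̄ − 1 ∈ N`. -/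
def UHyp {D : Type*} [DivisionRing D] (N : Subgroup Dˣ) (S : Set D) : Prop :=
  (∀ g : Dˣ, (fun t => (g : D)⁻¹ * t * (g : D)) '' S = S) ∧
  S.Nonempty ∧ S ⊂ unitsSet N ∧
  (1 : D) ∈ S ∧ (-1 : D) ∈ S ∧
  S * S = S ∧
  (∀ t ∈ unitsSet N \ S, t + 1 ∈ S ∧ t - 1 ∈ unitsSet N)

/-!
Think of `U = uSet S` as the elements of valuation zero and of `T = tSet N S = N ∖ S` as those
of positive valuation: the U-Hypothesis gives `T T ⊆ T`, `T + U ⊆ U` and `N = U ∪ T ∪ T⁻¹`.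
Hence a vanishing sum of elements of `N` has two terms of equal "valuation". Applied to the
terms `cᵢ nⁱ` of the minimal polynomial of `n` over the centre, this gives a central `c` and
`k ≥ 1` with `c nᵏ ∈ U`. For a conjugate `y` of `n` then also `c yᵏ ∈ U`, so `n⁻ᵏ yᵏ ∈ U`;
as `x⁻¹ y ∈ T` forces `x⁻ᵏ yᵏ ∈ T`, this yields `n⁻¹ y ∈ U`.
-/

section

variable {D : Type*} [DivisionRing D] {N : Subgroup Dˣ} {S : Set D}

def uSet (S : Set D) : Set D := {t | t ∈ S ∧ t⁻¹ ∈ S}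

def tSet (N : Subgroup Dˣ) (S : Set D) : Set D := unitsSet N \ S

namespace unitsSet

theorem ne_zero {a : D} (ha : a ∈ unitsSet N) : a ≠ 0 := by
  obtain ⟨x, -, rfl⟩ := ha
  exact x.ne_zero

theorem inv_mem {a : D} (ha : a ∈ unitsSet N) : a⁻¹ ∈ unitsSet N := by
  obtain ⟨x, hx, rfl⟩ := ha
  exact ⟨x⁻¹, N.inv_mem hx, Units.val_inv_eq_inv_val x⟩

theorem mul_mem {a b : D} (ha : a ∈ unitsSet N) (hb : b ∈ unitsSet N) :
    a * b ∈ unitsSet N := by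
  obtain ⟨x, hx, rfl⟩ := ha
  obtain ⟨y, hy, rfl⟩ := hb
  exact ⟨x * y, N.mul_mem hx hy, rfl⟩

end unitsSet

theorem inv_mem_uSet {a : D} (ha : a ∈ uSet S) : a⁻¹ ∈ uSet S :=
  ⟨ha.2, (inv_inv a).symm ▸ ha.1⟩

theorem inv_mul_pow_mul_mul_pow {a b n : D} (hab : a⁻¹ * b ∈ Set.center D) (hn : n ≠ 0)
    {i j : ℕ} (hij : i ≤ j) : (a * n ^ i)⁻¹ * (b * n ^ j) = a⁻¹ * b * n ^ (j - i) := by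
  have hpow : n ^ j = n ^ i * n ^ (j - i) := by rw [← pow_add, Nat.add_sub_cancel' hij]
  calc (a * n ^ i)⁻¹ * (b * n ^ j) = (n ^ i)⁻¹ * (a⁻¹ * b) * n ^ i * n ^ (j - i) := by
        simp only [mul_inv_rev, hpow, mul_assoc]
    _ = a⁻¹ * b * n ^ (j - i) := by
        rw [Semigroup.mem_center_iff.1 hab, inv_mul_cancel_right₀ (pow_ne_zero i hn)]

namespace UHyp

theorem conj_image_eq (h : UHyp N S) (g : Dˣ) : (fun t => (g : D)⁻¹ * t * g) '' S = S := h.1 g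

theorem subset (h : UHyp N S) : S ⊆ unitsSet N := h.2.2.1.subset

theorem one_mem (h : UHyp N S) : (1 : D) ∈ S := h.2.2.2.1

theorem neg_one_mem (h : UHyp N S) : (-1 : D) ∈ S := h.2.2.2.2.1

theorem mul_eq (h : UHyp N S) : S * S = S := h.2.2.2.2.2.1

theorem add_one_mem (h : UHyp N S) {t : D} (ht : t ∈ tSet N S) : t + 1 ∈ S :=
  (h.2.2.2.2.2.2 t ht).1

theorem sub_one_mem_unitsSet (h : UHyp N S) {t : D} (ht : t ∈ tSet N S) : t - 1 ∈ unitsSet N :=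
  (h.2.2.2.2.2.2 t ht).2

theorem ne_zero (h : UHyp N S) {a : D} (ha : a ∈ S) : a ≠ 0 :=
  unitsSet.ne_zero (h.subset ha)

theorem mul_mem (h : UHyp N S) {a b : D} (ha : a ∈ S) (hb : b ∈ S) : a * b ∈ S := by
  rw [← h.mul_eq]
  exact Set.mul_mem_mul ha hb

theorem neg_mem (h : UHyp N S) {a : D} (ha : a ∈ S) : -a ∈ S := by
  simpa using h.mul_mem h.neg_one_mem ha

theorem conj_mem_iff (h : UHyp N S) (g : Dˣ) {a : D} : (g : D)⁻¹ * a * g ∈ S ↔ a ∈ S := by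
  have conj_mem : ∀ (g : Dˣ) {a : D}, a ∈ S → (g : D)⁻¹ * a * g ∈ S :=
    fun g a ha => h.conj_image_eq g ▸ ⟨a, ha, rfl⟩
  refine ⟨fun ha => ?_, conj_mem g⟩
  simpa [mul_assoc] using conj_mem g⁻¹ ha

theorem one_mem_uSet (h : UHyp N S) : (1 : D) ∈ uSet S :=
  ⟨h.one_mem, by rw [inv_one]; exact h.one_mem⟩

theorem mul_mem_uSet (h : UHyp N S) {a b : D} (ha : a ∈ uSet S) (hb : b ∈ uSet S) :
    a * b ∈ uSet S :=
  ⟨h.mul_mem ha.1 hb.1, mul_inv_rev a b ▸ h.mul_mem hb.2 ha.2⟩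

theorem neg_mem_uSet (h : UHyp N S) {a : D} (ha : a ∈ uSet S) : -a ∈ uSet S :=
  ⟨h.neg_mem ha.1, inv_neg (a := a) ▸ h.neg_mem ha.2⟩

theorem sub_one_mem (h : UHyp N S) {t : D} (ht : t ∈ tSet N S) : t - 1 ∈ S := by
  by_contra hS
  have := h.add_one_mem ⟨h.sub_one_mem_unitsSet ht, hS⟩
  exact ht.2 (by simpa using this)

theorem neg_mem_tSet (h : UHyp N S) {t : D} (ht : t ∈ tSet N S) : -t ∈ tSet N S := by
  refine ⟨by simpa using unitsSet.mul_mem (h.subset h.neg_one_mem) ht.1, fun hS => ht.2 ?_⟩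
  simpa using h.neg_mem hS

theorem add_one_mem_uSet (h : UHyp N S) {t : D} (ht : t ∈ tSet N S) : t + 1 ∈ uSet S := by
  refine ⟨h.add_one_mem ht, by_contra fun hS => ht.2 ?_⟩
  have hinv : (t + 1)⁻¹ ∈ tSet N S := ⟨unitsSet.inv_mem (h.subset (h.add_one_mem ht)), hS⟩
  have key : -((t + 1)⁻¹ - 1) * (t + 1) = t := by
    rw [neg_sub, sub_mul, one_mul, inv_mul_cancel₀ (h.ne_zero (h.add_one_mem ht)),
      add_sub_cancel_right]
  exact key ▸ h.mul_mem (h.neg_mem (h.sub_one_mem hinv)) (h.add_one_mem ht)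

theorem sub_one_mem_uSet (h : UHyp N S) {t : D} (ht : t ∈ tSet N S) : t - 1 ∈ uSet S := by
  simpa [neg_add_eq_sub] using h.neg_mem_uSet (h.add_one_mem_uSet (h.neg_mem_tSet ht))

theorem mul_mem_tSet_of_mem_uSet (h : UHyp N S) {u t : D} (hu : u ∈ uSet S)
    (ht : t ∈ tSet N S) : u * t ∈ tSet N S := by
  refine ⟨unitsSet.mul_mem (h.subset hu.1) ht.1, fun hS => ht.2 ?_⟩
  simpa [inv_mul_cancel_left₀ (h.ne_zero hu.1)] using h.mul_mem hu.2 hS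

theorem mul_mem_tSet_of_mem_tSet_of_mem_uSet (h : UHyp N S) {t u : D} (ht : t ∈ tSet N S)
    (hu : u ∈ uSet S) : t * u ∈ tSet N S := by
  refine ⟨unitsSet.mul_mem ht.1 (h.subset hu.1), fun hS => ht.2 ?_⟩
  simpa [mul_inv_cancel_right₀ (h.ne_zero hu.1)] using h.mul_mem hS hu.2

theorem add_mem_uSet (h : UHyp N S) {t u : D} (ht : t ∈ tSet N S) (hu : u ∈ uSet S) :
    t + u ∈ uSet S := by
  have key : u * (u⁻¹ * t + 1) = t + u := by
    rw [mul_add, mul_one, mul_inv_cancel_left₀ (h.ne_zero hu.1)]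
  exact key ▸ h.mul_mem_uSet hu
    (h.add_one_mem_uSet (h.mul_mem_tSet_of_mem_uSet (inv_mem_uSet hu) ht))

theorem inv_mem_of_mem_tSet (h : UHyp N S) {t : D} (ht : t ∈ tSet N S) : t⁻¹ ∈ S := by
  by_contra hS
  have hinv : t⁻¹ ∈ tSet N S := ⟨unitsSet.inv_mem ht.1, hS⟩
  -- `t - t⁻¹ = (t - 1)(t⁻¹ + 1)` is in `U`, hence so is `t = t⁻¹ + (t - t⁻¹)`
  have key : (t - 1) * (t⁻¹ + 1) = t - t⁻¹ := by
    rw [mul_add, mul_one, sub_mul, one_mul, mul_inv_cancel₀ (unitsSet.ne_zero ht.1)]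
    abel
  have hdiff := key ▸ h.mul_mem_uSet (h.sub_one_mem_uSet ht) (h.add_one_mem_uSet hinv)
  exact ht.2 (add_sub_cancel t⁻¹ t ▸ h.add_mem_uSet hinv hdiff).1

theorem mul_mem_tSet (h : UHyp N S) {t t' : D} (ht : t ∈ tSet N S) (ht' : t' ∈ tSet N S) :
    t * t' ∈ tSet N S := by
  refine ⟨unitsSet.mul_mem ht.1 ht'.1, fun hS => ht.2 ?_⟩
  simpa [mul_inv_cancel_right₀ (unitsSet.ne_zero ht'.1)] using
    h.mul_mem hS (h.inv_mem_of_mem_tSet ht')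

theorem mem_uSet_or_mem_tSet_or_inv_mem_tSet {a : D} (ha : a ∈ unitsSet N) :
    a ∈ uSet S ∨ a ∈ tSet N S ∨ a⁻¹ ∈ tSet N S := by
  by_cases haS : a ∈ S
  · by_cases haS' : a⁻¹ ∈ S
    · exact Or.inl ⟨haS, haS'⟩
    · exact Or.inr (Or.inr ⟨unitsSet.inv_mem ha, haS'⟩)
  · exact Or.inr (Or.inl ⟨ha, haS⟩)

theorem conj_mem_uSet (h : UHyp N S) (g : Dˣ) {a : D} (ha : a ∈ uSet S) :
    (g : D)⁻¹ * a * g ∈ uSet S := by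
  refine ⟨(h.conj_mem_iff g).2 ha.1, ?_⟩
  simpa [mul_assoc] using (h.conj_mem_iff g).2 ha.2

theorem conj_mem_tSet [N.Normal] (h : UHyp N S) (g : Dˣ) {a : D} (ha : a ∈ tSet N S) :
    (g : D)⁻¹ * a * g ∈ tSet N S := by
  obtain ⟨⟨x, hx, rfl⟩, hxS⟩ := ha
  refine ⟨⟨g⁻¹ * x * g, ?_, by simp⟩, fun hS => hxS ((h.conj_mem_iff g).1 hS)⟩
  simpa using ‹N.Normal›.conj_mem x hx g⁻¹

theorem exists_inv_mul_sum_mem_uSet (h : UHyp N S) {ι : Type*} {s : Finset ι}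
    (hs : s.Nonempty) {x : ι → D} (hx : ∀ i ∈ s, x i ∈ unitsSet N)
    (hpair : (s : Set ι).Pairwise fun i j => (x i)⁻¹ * x j ∉ uSet S) :
    ∃ m ∈ s, (x m)⁻¹ * ∑ i ∈ s, x i ∈ uSet S := by
  induction hs using Finset.Nonempty.cons_induction with
  | singleton a =>
    refine ⟨a, Finset.mem_singleton_self a, ?_⟩
    simpa [inv_mul_cancel₀ (unitsSet.ne_zero (hx a (Finset.mem_singleton_self a)))] using
      h.one_mem_uSet
  | cons a s ha hs ih =>
    simp only [Finset.mem_cons, forall_eq_or_imp, Finset.coe_cons] at hx hpair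
    obtain ⟨m, hm, hmU⟩ := ih hx.2 (hpair.mono (Set.subset_insert a _))
    have hma : m ≠ a := fun hma => ha (hma ▸ hm)
    have hxm := unitsSet.ne_zero (hx.2 m hm)
    have hxa := unitsSet.ne_zero hx.1
    rw [Finset.sum_cons]
    rcases mem_uSet_or_mem_tSet_or_inv_mem_tSet
      (unitsSet.mul_mem (unitsSet.inv_mem (hx.2 m hm)) hx.1) with hU | hT | hT
    · exact absurd hU (hpair (Set.mem_insert_of_mem a hm) (Set.mem_insert a _) hma)
    · exact ⟨m, Finset.mem_cons_of_mem hm, mul_add (x m)⁻¹ _ _ ▸ h.add_mem_uSet hT hmU⟩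
    · refine ⟨a, Finset.mem_cons_self a s, ?_⟩
      have key : (x a)⁻¹ * (x a + ∑ i ∈ s, x i) =
          ((x m)⁻¹ * x a)⁻¹ * ((x m)⁻¹ * ∑ i ∈ s, x i) + 1 := by
        rw [mul_inv_rev, inv_inv, mul_add, inv_mul_cancel₀ hxa, mul_assoc,
          mul_inv_cancel_left₀ hxm, add_comm]
      exact key ▸ h.add_one_mem_uSet (h.mul_mem_tSet_of_mem_tSet_of_mem_uSet hT hmU)

theorem exists_ne_inv_mul_mem_uSet_of_sum_eq_zero (h : UHyp N S) {ι : Type*} {s : Finset ι}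
    (hs : s.Nonempty) {x : ι → D} (hx : ∀ i ∈ s, x i ∈ unitsSet N) (hsum : ∑ i ∈ s, x i = 0) :
    ∃ i ∈ s, ∃ j ∈ s, i ≠ j ∧ (x i)⁻¹ * x j ∈ uSet S := by
  by_contra! hpair
  obtain ⟨m, -, hm⟩ := h.exists_inv_mul_sum_mem_uSet hs hx hpair
  rw [hsum, mul_zero] at hm
  exact h.ne_zero hm.1 rfl

theorem inv_pow_mul_pow_mem_tSet [N.Normal] (h : UHyp N S) {x y : Dˣ}
    (hxy : (x : D)⁻¹ * y ∈ tSet N S) {k : ℕ} (hk : k ≠ 0) :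
    ((x : D) ^ k)⁻¹ * (y : D) ^ k ∈ tSet N S := by
  induction k with
  | zero => exact absurd rfl hk
  | succ k ih =>
    rcases eq_or_ne k 0 with rfl | hk
    · simpa using hxy
    have key : ((x : D) ^ (k + 1))⁻¹ * (y : D) ^ (k + 1) =
        (((x : D) ^ k)⁻¹ * (y : D) ^ k) * (((y : D) ^ k)⁻¹ * ((x : D)⁻¹ * y) * (y : D) ^ k) := by
      simp only [pow_succ', mul_inv_rev, mul_assoc,
        mul_inv_cancel_left₀ (pow_ne_zero k y.ne_zero)]
    rw [key]
    exact h.mul_mem_tSet (ih hk) (by simpa using h.conj_mem_tSet (y ^ k) hxy)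

theorem inv_mul_mem_uSet_of_inv_pow_mul_pow_mem_uSet [N.Normal] (h : UHyp N S) {x y : Dˣ}
    (hx : x ∈ N) (hy : y ∈ N) {k : ℕ} (hk : k ≠ 0)
    (hxy : ((x : D) ^ k)⁻¹ * (y : D) ^ k ∈ uSet S) : (x : D)⁻¹ * y ∈ uSet S := by
  have hmem : (x : D)⁻¹ * y ∈ unitsSet N := ⟨x⁻¹ * y, N.mul_mem (N.inv_mem hx) hy, by simp⟩
  rcases mem_uSet_or_mem_tSet_or_inv_mem_tSet hmem with hU | hT | hT
  · exact hU
  · exact absurd hxy.1 (h.inv_pow_mul_pow_mem_tSet hT hk).2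
  · rw [mul_inv_rev, inv_inv] at hT
    have hxy' := hxy.2
    rw [mul_inv_rev, inv_inv] at hxy'
    exact absurd hxy' (h.inv_pow_mul_pow_mem_tSet hT hk).2

theorem inv_pow_mul_conj_pow_mem_uSet (h : UHyp N S) {c n : D} (hc : c ∈ Set.center D) {k : ℕ}
    (hck : c * n ^ k ∈ uSet S) (g : Dˣ) : (n ^ k)⁻¹ * ((g : D)⁻¹ * n * g) ^ k ∈ uSet S := by
  have hc0 : c ≠ 0 := left_ne_zero_of_mul (h.ne_zero hck.1)
  have key : (n ^ k)⁻¹ * ((g : D)⁻¹ * n * g) ^ k =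
      (c * n ^ k)⁻¹ * ((g : D)⁻¹ * (c * n ^ k) * g) := by
    have hconj : (g : D)⁻¹ * (c * n ^ k) * g = c * ((g : D)⁻¹ * n ^ k * g) := by
      rw [← mul_assoc, Semigroup.mem_center_iff.1 hc, mul_assoc c, mul_assoc c]
    rw [hconj, mul_inv_rev, mul_assoc (n ^ k)⁻¹, inv_mul_cancel_left₀ hc0,
      ← Units.val_inv_eq_inv_val, Units.conj_pow']
  exact key ▸ h.mul_mem_uSet (inv_mem_uSet hck) (h.conj_mem_uSet g hck)

theorem exists_center_mul_pow_mem_uSet (h : UHyp N S)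
    (hF : ∀ x : Dˣ, (x : D) ∈ Set.center D → x ∈ N) [FiniteDimensional (Subring.center D) D]
    {n : Dˣ} (hn : n ∈ N) : ∃ c ∈ Set.center D, ∃ k ≠ 0, c * (n : D) ^ k ∈ uSet S := by
  have hint : IsIntegral (Subring.center D) (n : D) := .of_finite _ _
  set p := minpoly (Subring.center D) (n : D)
  set x : ℕ → D := fun i => (p.coeff i : D) * (n : D) ^ i
  have hx : ∀ i ∈ p.support, x i ∈ unitsSet N := fun i hi =>
    ⟨Units.mk0 _ (by simpa using Polynomial.mem_support_iff.1 hi) * n ^ i,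
      N.mul_mem (hF _ (p.coeff i).2) (N.pow_mem hn i), by simp [x]⟩
  have hsum : ∑ i ∈ p.support, x i = 0 := by
    rw [← minpoly.aeval (Subring.center D) (n : D), Polynomial.aeval_def,
      Polynomial.eval₂_eq_sum, Polynomial.sum_def]
    rfl
  have hcoeff : ∀ {i j}, i < j → (x i)⁻¹ * x j ∈ uSet S →
      ∃ c ∈ Set.center D, ∃ k ≠ 0, c * (n : D) ^ k ∈ uSet S := fun {i j} hij hU =>
    have hc := Set.mul_mem_center (Set.inv_mem_center (p.coeff i).2) (p.coeff j).2
    ⟨_, hc, j - i, by omega, inv_mul_pow_mul_mul_pow hc n.ne_zero hij.le ▸ hU⟩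
  obtain ⟨i, -, j, -, hij, hU⟩ := h.exists_ne_inv_mul_mem_uSet_of_sum_eq_zero
    (Polynomial.nonempty_support_iff.2 (minpoly.ne_zero hint)) hx hsum
  rcases hij.lt_or_gt with hij | hij
  · exact hcoeff hij hU
  · exact hcoeff hij (by simpa [mul_inv_rev] using inv_mem_uSet hU)

end UHyp
end

theorem stmt_18_general {D : Type*} [DivisionRing D] (N : Subgroup Dˣ)
    [N.Normal] (hF : ∀ x : Dˣ, (x : D) ∈ Set.center D → x ∈ N)
    (S : Set D) (hS : UHyp N S)
    [FiniteDimensional (Subring.center D) D] :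
    ∀ g : Dˣ, ∀ n : Dˣ, n ∈ N →
      ((g⁻¹ * n⁻¹ * g * n : Dˣ) : D) ∈ {t : D | t ∈ S ∧ t⁻¹ ∈ S} := by
  intro g n hn
  obtain ⟨c, hc, k, hk, hck⟩ := hS.exists_center_mul_pow_mem_uSet hF hn
  have hconj : (n : D)⁻¹ * ↑(g⁻¹ * n * g) ∈ uSet S :=
    hS.inv_mul_mem_uSet_of_inv_pow_mul_pow_mem_uSet hn (‹N.Normal›.conj_mem' n hn g) hk
      (by simpa using hS.inv_pow_mul_conj_pow_mem_uSet hc hck g)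
  have hcomm : ((g⁻¹ * n⁻¹ * g * n : Dˣ) : D) = ((n : D)⁻¹ * ↑(g⁻¹ * n * g))⁻¹ := by
    rw [← Units.val_inv_eq_inv_val, ← Units.val_mul, ← Units.val_inv_eq_inv_val]
    group
  exact hcomm ▸ inv_mem_uSet hconj

/-- Under the U-Hypothesis, with `U = {n ∈ S : n⁻¹ ∈ S}`, if
`D` is finite dimensional over its center `F`, then the image of `N` in `G/U`
is central: for all `g ∈ G` and `n ∈ N`, the commutator `g⁻¹n⁻¹gn ∈ U`. -/
theorem stmt_18 {D : Type*} [DivisionRing D] [Infinite D] (N : Subgroup Dˣ)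
    [N.Normal] (hF : ∀ x : Dˣ, (x : D) ∈ Set.center D → x ∈ N)
    (hfin : Finite (Dˣ ⧸ N))
    (S : Set D) (hS : UHyp N S)
    [FiniteDimensional (Subring.center D) D] :
    ∀ g : Dˣ, ∀ n : Dˣ, n ∈ N →
      ((g⁻¹ * n⁻¹ * g * n : Dˣ) : D) ∈ {t : D | t ∈ S ∧ t⁻¹ ∈ S} :=
  stmt_18_general N hF S hS
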